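/- Let G be a finite bipartite graph with bipartition (U, V), let a, b ∈ U with a ≠ b, and suppose that either a and b lie in different connected components of G, or the graph distance between a and b in G is at least 4. Then there exists an optimal bicluster editing H of G such that no vertex k ∈ V is adjacent in H to both a and b. -/

import Mathlib

/-!
Take an optimal editing `H`. If `a` and `b` have a common neighbour in `H`, they lie in the same
biclique and so have the same neighbourhood `T` in `H`. As they are far apart in `G`, no vertex is a
`G`-neighbour of both, so one of them, say `a`, has at most `|T| / 2` of its `G`-neighbours in `T`.
Deleting all `H`-edges at `a` keeps `H` a bicluster graph and does not increase the edit cost: it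
restores `|T \ N_G(a)|` edges and removes `|T ∩ N_G(a)| ≤ |T \ N_G(a)|` edges of `G`.
-/

variable {α : Type*}

/-- `G` is a bipartite graph with bipartition `(U, V)`: the parts cover the vertex set,
are disjoint, and every edge joins a vertex of `U` to a vertex of `V`. -/
def IsBipartiteWith (G : SimpleGraph α) (U V : Set α) : Prop :=
  (∀ x, x ∈ U ∨ x ∈ V) ∧ Disjoint U V ∧
    ∀ ⦃x y⦄, G.Adj x y → (x ∈ U ∧ y ∈ V) ∨ (x ∈ V ∧ y ∈ U)

/-- A bicluster graph with bipartition `(U, V)`: a bipartite graph each of whose connected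
components is a complete bipartite graph, i.e. any two vertices of `U` and `V` lying in the
same connected component are adjacent. -/
def IsBiclusterGraph (G : SimpleGraph α) (U V : Set α) : Prop :=
  IsBipartiteWith G U V ∧ ∀ i ∈ U, ∀ j ∈ V, G.Reachable i j → G.Adj i j

/-- `G` contains the path on four vertices `P4` as an induced subgraph. -/
def HasInducedP4 (G : SimpleGraph α) : Prop :=
  ∃ a b c d : α, a ≠ b ∧ a ≠ c ∧ a ≠ d ∧ b ≠ c ∧ b ≠ d ∧ c ≠ d ∧
    G.Adj a b ∧ G.Adj b c ∧ G.Adj c d ∧ ¬ G.Adj a c ∧ ¬ G.Adj b d ∧ ¬ G.Adj a d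

/-- The edit cost of `H` relative to `G`: number of edge deletions plus edge additions. -/
noncomputable def editCost (G H : SimpleGraph α) : ℕ :=
  (G.edgeSet \ H.edgeSet).ncard + (H.edgeSet \ G.edgeSet).ncard

/-- `H` is an optimal bicluster editing of `G` with respect to the bipartition `(U, V)`. -/
def IsOptimalBiclusterEditing (G H : SimpleGraph α) (U V : Set α) : Prop :=
  IsBiclusterGraph H U V ∧
    ∀ H' : SimpleGraph α, IsBiclusterGraph H' U V → editCost G H ≤ editCost G H'

/-- The grouping efficacy `(m - d) / (m + a)` of `H` relative to `G`, where `m = |E(G)|`,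
`d` is the number of deleted edges and `a` the number of added edges. -/
noncomputable def efficacy (G H : SimpleGraph α) : ℝ :=
  ((G.edgeSet.ncard : ℝ) - ((G.edgeSet \ H.edgeSet).ncard : ℝ)) /
    ((G.edgeSet.ncard : ℝ) + ((H.edgeSet \ G.edgeSet).ncard : ℝ))

namespace SimpleGraph

lemma eq_of_reachable_of_forall_not_adj {G : SimpleGraph α} {a b : α}
    (hiso : ∀ x, ¬ G.Adj a x) (h : G.Reachable a b) : a = b := by
  obtain ⟨_ | ⟨hadj, _⟩⟩ := h
  · rfl
  · exact absurd hadj (hiso _)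

lemma ncard_incidenceSet (G : SimpleGraph α) (a : α) :
    (G.incidenceSet a).ncard = (G.neighborSet a).ncard := by
  classical exact Nat.card_congr (G.incidenceSetEquivNeighborSet a)

end SimpleGraph

section EditCost

open SimpleGraph

lemma editCost_deleteIncidenceSet_add [Finite α] (G H : SimpleGraph α) (a : α) :
    editCost G (H.deleteIncidenceSet a) + (H.neighborSet a \ G.neighborSet a).ncard =
      editCost G H + (H.neighborSet a ∩ G.neighborSet a).ncard := by
  have hdel : G.edgeSet \ (H.deleteIncidenceSet a).edgeSet =
      (G.edgeSet \ H.edgeSet) ∪ (H ⊓ G).incidenceSet a := by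
    ext e
    simp only [edgeSet_deleteIncidenceSet, incidenceSet, edgeSet_inf]
    grind
  have hadd : (H.deleteIncidenceSet a).edgeSet \ G.edgeSet =
      (H \ G).edgeSet \ (H \ G).incidenceSet a := by
    ext e
    simp only [edgeSet_deleteIncidenceSet, incidenceSet, edgeSet_sdiff]
    grind
  have hdisj : Disjoint (G.edgeSet \ H.edgeSet) ((H ⊓ G).incidenceSet a) :=
    Set.disjoint_left.mpr fun _ he he' => he.2 (edgeSet_mono inf_le_left he'.1)
  have hsub : (H \ G).incidenceSet a ⊆ (H \ G).edgeSet := incidenceSet_subset _ a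
  have hcard := Set.ncard_le_ncard hsub
  unfold editCost
  rw [hdel, hadd, Set.ncard_union_eq hdisj, Set.ncard_sdiff hsub, ← edgeSet_sdiff H G,
    ncard_incidenceSet, ncard_incidenceSet, neighborSet_inf, neighborSet_sdiff]
  rw [ncard_incidenceSet, neighborSet_sdiff] at hcard
  omega

lemma editCost_deleteIncidenceSet_le [Finite α] {G H : SimpleGraph α} {a : α}
    (h : 2 * (H.neighborSet a ∩ G.neighborSet a).ncard ≤ (H.neighborSet a).ncard) :
    editCost G (H.deleteIncidenceSet a) ≤ editCost G H := by
  have := editCost_deleteIncidenceSet_add G H a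
  have := Set.ncard_inter_add_ncard_sdiff_eq_ncard (H.neighborSet a) (G.neighborSet a)
  omega

end EditCost

lemma IsBipartiteWith.isBiclusterGraph_bot {G : SimpleGraph α} {U V : Set α}
    (hG : IsBipartiteWith G U V) : IsBiclusterGraph ⊥ U V := by
  obtain ⟨hcov, hdisj, -⟩ := hG
  refine ⟨⟨hcov, hdisj, fun _ _ h => h.elim⟩, fun i hi j hj hr => ?_⟩
  rw [SimpleGraph.reachable_bot] at hr
  exact absurd (hr ▸ hj) (Set.disjoint_left.mp hdisj hi)

lemma IsBipartiteWith.mem_right_of_adj {G : SimpleGraph α} {U V : Set α}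
    (hG : IsBipartiteWith G U V) {u v : α} (hu : u ∈ U) (h : G.Adj u v) : v ∈ V := by
  rcases hG.2.2 h with ⟨-, hv⟩ | ⟨hu', -⟩
  · exact hv
  · exact absurd hu' (Set.disjoint_left.mp hG.2.1 hu)

namespace IsBiclusterGraph

variable {H : SimpleGraph α} {U V : Set α}

lemma deleteIncidenceSet (hH : IsBiclusterGraph H U V) (a : α) :
    IsBiclusterGraph (H.deleteIncidenceSet a) U V := by
  obtain ⟨⟨hcov, hdisj, hadj⟩, hcl⟩ := hH
  refine ⟨⟨hcov, hdisj, fun _ _ h => hadj (SimpleGraph.deleteIncidenceSet_le H a h)⟩, ?_⟩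
  intro i hi j hj hr
  have hij : i ≠ j := fun h => Set.disjoint_left.mp hdisj hi (h ▸ hj)
  have hiso : ∀ x, ¬ (H.deleteIncidenceSet a).Adj a x := fun _ h =>
    (SimpleGraph.deleteIncidenceSet_adj.mp h).2.1 rfl
  refine SimpleGraph.deleteIncidenceSet_adj.mpr
    ⟨hcl i hi j hj (hr.mono (SimpleGraph.deleteIncidenceSet_le H a)), ?_, ?_⟩
  · rintro rfl
    exact hij (SimpleGraph.eq_of_reachable_of_forall_not_adj hiso hr)
  · rintro rfl
    exact hij (SimpleGraph.eq_of_reachable_of_forall_not_adj hiso hr.symm).symm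

lemma neighborSet_eq_of_adj_of_adj (hH : IsBiclusterGraph H U V) {a b k : α}
    (ha : a ∈ U) (hb : b ∈ U) (hak : H.Adj a k) (hbk : H.Adj b k) :
    H.neighborSet a = H.neighborSet b := by
  have hab : H.Reachable a b := hak.reachable.trans hbk.reachable.symm
  ext j
  constructor
  · intro h
    exact hH.2 b hb j (hH.1.mem_right_of_adj ha h) (hab.symm.trans h.reachable)
  · intro h
    exact hH.2 a ha j (hH.1.mem_right_of_adj hb h) (hab.trans h.reachable)

end IsBiclusterGraph

lemma exists_isOptimalBiclusterEditing (G : SimpleGraph α) {K : SimpleGraph α} {U V : Set α}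
    (hK : IsBiclusterGraph K U V) : ∃ H, IsOptimalBiclusterEditing G H U V :=
  ⟨Function.argminOn (editCost G) {K | IsBiclusterGraph K U V} ⟨K, hK⟩,
    Function.argminOn_mem (editCost G) {K | IsBiclusterGraph K U V} _,
    fun _ hH' => Function.argminOn_le (editCost G) {K | IsBiclusterGraph K U V} hH'⟩

lemma IsOptimalBiclusterEditing.deleteIncidenceSet [Finite α] {G H : SimpleGraph α}
    {U V : Set α} (hH : IsOptimalBiclusterEditing G H U V) {a : α}
    (h : 2 * (H.neighborSet a ∩ G.neighborSet a).ncard ≤ (H.neighborSet a).ncard) :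
    IsOptimalBiclusterEditing G (H.deleteIncidenceSet a) U V :=
  ⟨hH.1.deleteIncidenceSet a, fun H' hH' =>
    (editCost_deleteIncidenceSet_le h).trans (hH.2 H' hH')⟩

lemma exists_optimal_editing_no_common_neighbor_of_disjoint [Finite α] {G H : SimpleGraph α}
    {U V : Set α} (hH : IsOptimalBiclusterEditing G H U V) {a b : α} (ha : a ∈ U) (hb : b ∈ U)
    (hGab : Disjoint (G.neighborSet a) (G.neighborSet b)) :
    ∃ H' : SimpleGraph α, IsOptimalBiclusterEditing G H' U V ∧
      ∀ k, ¬ (H'.Adj a k ∧ H'.Adj b k) := by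
  by_cases hcommon : ∃ k, H.Adj a k ∧ H.Adj b k
  swap
  · exact ⟨H, hH, not_exists.mp hcommon⟩
  obtain ⟨k, hak, hbk⟩ := hcommon
  have hT := hH.1.neighborSet_eq_of_adj_of_adj ha hb hak hbk
  have hsplit : (H.neighborSet a ∩ G.neighborSet a).ncard +
      (H.neighborSet a ∩ G.neighborSet b).ncard ≤ (H.neighborSet a).ncard := by
    rw [← Set.ncard_union_eq (hGab.mono Set.inter_subset_right Set.inter_subset_right)]
    exact Set.ncard_le_ncard (Set.union_subset Set.inter_subset_left Set.inter_subset_left)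
  rcases le_total (H.neighborSet a ∩ G.neighborSet a).ncard
    (H.neighborSet a ∩ G.neighborSet b).ncard with hle | hle
  · refine ⟨H.deleteIncidenceSet a, hH.deleteIncidenceSet (by omega), fun k hk => ?_⟩
    exact (SimpleGraph.deleteIncidenceSet_adj.mp hk.1).2.1 rfl
  · have hb_half :
        2 * (H.neighborSet b ∩ G.neighborSet b).ncard ≤ (H.neighborSet b).ncard := by
      rw [← hT]
      omega
    refine ⟨H.deleteIncidenceSet b, hH.deleteIncidenceSet hb_half, fun k hk => ?_⟩
    exact (SimpleGraph.deleteIncidenceSet_adj.mp hk.2).2.1 rfl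

theorem exists_optimal_editing_no_common_neighbor_general [Fintype α] (G : SimpleGraph α)
    (U V : Set α) (hG : IsBipartiteWith G U V) (a b : α) (ha : a ∈ U) (hb : b ∈ U)
    (hab : ¬ G.Reachable a b ∨ 4 ≤ G.dist a b) :
    ∃ H : SimpleGraph α, IsOptimalBiclusterEditing G H U V ∧
      ∀ k ∈ V, ¬ (H.Adj a k ∧ H.Adj b k) := by
  have hGab : Disjoint (G.neighborSet a) (G.neighborSet b) := by
    refine Set.disjoint_left.mpr fun k hak hbk => ?_
    let p : G.Walk a b := .cons hak (.cons (G.adj_symm hbk) .nil)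
    rcases hab with hr | hd
    · exact hr p.reachable
    · have : G.dist a b ≤ 2 := SimpleGraph.dist_le p
      omega
  obtain ⟨H, hH⟩ := exists_isOptimalBiclusterEditing G hG.isBiclusterGraph_bot
  obtain ⟨H', hH', hno⟩ := exists_optimal_editing_no_common_neighbor_of_disjoint hH ha hb hGab
  exact ⟨H', hH', fun k _ => hno k⟩

/-- Cut-generation rule: if `a ≠ b` in `U` lie in different components of `G` or are at
distance at least `4`, then some optimal bicluster editing has no `k ∈ V` adjacent to both. -/
theorem exists_optimal_editing_no_common_neighbor [Fintype α] (G : SimpleGraph α)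
    (U V : Set α) (hG : IsBipartiteWith G U V) (a b : α) (ha : a ∈ U) (hb : b ∈ U)
    (hne : a ≠ b) (hab : ¬ G.Reachable a b ∨ 4 ≤ G.dist a b) :
    ∃ H : SimpleGraph α, IsOptimalBiclusterEditing G H U V ∧
      ∀ k ∈ V, ¬ (H.Adj a k ∧ H.Adj b k) :=
  exists_optimal_editing_no_common_neighbor_general G U V hG a b ha hb hab
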